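/- arXiv:2112.11781 — 2 statements merged into one kernel-verified Lean document; each statement's English description precedes it below -/
import Mathlib

section
/- CT_ψ together with an Sₘₙ operator implies SCT: if ψ is stationary and universal for ℕ → ℕ, and there is σ : ℕ → ℕ → ℕ with (∃ n, ψ (σ c x) y n = some v) ↔ (∃ n, ψ c ⟨x,y⟩ n = some v) for all c x y v, then ψ is parametrically universal, i.e. for every f : ℕ → ℕ → ℕ there exists γ : ℕ → ℕ such that ∀ i x, ∃ n, ψ (γ i) x n = some (f i x). -/
theorem CT_SMN_to_SCT (ψ : ℕ → ℕ → ℕ → Option ℕ)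
    (hstat : ∀ c x n₁ n₂ v, ψ c x n₁ = some v → n₂ ≥ n₁ → ψ c x n₂ = some v)
    (huniv : ∀ f : ℕ → ℕ, ∃ c, ∀ x, ∃ n, ψ c x n = some (f x))
    (σ : ℕ → ℕ → ℕ)
    (hσ : ∀ c x y v, (∃ n, ψ (σ c x) y n = some v) ↔ (∃ n, ψ c (Nat.pair x y) n = some v)) :
    ∀ f : ℕ → ℕ → ℕ, ∃ γ : ℕ → ℕ, ∀ i x, ∃ n, ψ (γ i) x n = some (f i x) := by
  intro f
  obtain ⟨c, hc⟩ := huniv (fun n => f (Nat.unpair n).1 (Nat.unpair n).2)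
  refine ⟨fun i => σ c i, fun i x => ?_⟩
  have := (hσ c i x (f i x)).mpr ?_
  · exact this
  · simpa using hc (Nat.pair i x)
end

section
/- SCT is equivalent to SCT_bool: there exists a stationary ψ : ℕ → ℕ → ℕ → option ℕ parametrically universal for ℕ → ℕ if and only if there exists a stationary ψ' : ℕ → ℕ → ℕ → option bool parametrically universal for ℕ → bool. -/
open Classical

private def cntB (b : ℕ → Bool) : ℕ → ℕ
  | 0 => 0
  | m + 1 => cntB b m + (if b m then 1 else 0)

private lemma cntB_mono (b : ℕ → Bool) : Monotone (cntB b) := by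
  apply monotone_nat_of_le_succ
  intro n
  simp only [cntB]
  exact Nat.le_add_right _ _

private lemma cntB_congr {b b' : ℕ → Bool} : ∀ n, (∀ k, k < n → b k = b' k) → cntB b n = cntB b' n
  | 0, _ => rfl
  | n + 1, h => by
    simp only [cntB, cntB_congr n (fun k hk => h k (Nat.lt_succ_of_lt hk)),
      h n (Nat.lt_succ_self n)]

private lemma cntB_stable {b : ℕ → Bool} {m n : ℕ} (h : m ≤ n)
    (hf : ∀ k, m ≤ k → k < n → b k = false) : cntB b n = cntB b m := by
  induction n with
  | zero => have : m = 0 := Nat.le_zero.mp h; simp [this]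
  | succ n ih =>
    rcases Nat.lt_or_ge m (n + 1) with hlt | hge
    · have hmn : m ≤ n := Nat.lt_succ_iff.mp hlt
      rw [cntB, hf n hmn (Nat.lt_succ_self n),
        ih hmn (fun k hk1 hk2 => hf k hk1 (Nat.lt_succ_of_lt hk2))]
      simp
    · have : m = n + 1 := le_antisymm h hge
      simp [this]

private def Sf (f : ℕ → ℕ) : ℕ → ℕ
  | 0 => 0
  | x + 1 => Sf f x + f x + 1

private def ef (f : ℕ → ℕ) (x : ℕ) : ℕ := Sf f x + f x

private lemma ef_strictMono (f : ℕ → ℕ) : StrictMono (ef f) := by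
  apply strictMono_nat_of_lt_succ
  intro n
  simp only [ef, Sf]
  omega

private def enc (f : ℕ → ℕ) (t : ℕ) : Bool := decide (∃ j ≤ t, ef f j = t)

private lemma enc_true_iff (f : ℕ → ℕ) (t : ℕ) : enc f t = true ↔ ∃ j, ef f j = t := by
  simp only [enc, decide_eq_true_iff]
  constructor
  · rintro ⟨j, _, hj⟩; exact ⟨j, hj⟩
  · rintro ⟨j, hj⟩
    exact ⟨j, hj ▸ (ef_strictMono f).le_apply, hj⟩

private lemma enc_ef (f : ℕ → ℕ) (x : ℕ) : enc f (ef f x) = true :=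
  (enc_true_iff f _).mpr ⟨x, rfl⟩

private lemma enc_false (f : ℕ → ℕ) {t : ℕ} (h : ∀ j, ef f j ≠ t) : enc f t = false := by
  by_contra hc
  rcases (enc_true_iff f t).mp (by revert hc; cases enc f t <;> simp) with ⟨j, hj⟩
  exact h j hj

private lemma cntB_enc (f : ℕ → ℕ) : ∀ x, cntB (enc f) (ef f x + 1) = x + 1 := by
  intro x
  induction x with
  | zero =>
    rw [cntB, enc_ef]
    have : cntB (enc f) (ef f 0) = cntB (enc f) 0 := by
      apply cntB_stable (Nat.zero_le _)
      intro k _ hk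
      apply enc_false
      intro j hj
      exact absurd (hj ▸ (ef_strictMono f).monotone (Nat.zero_le j)) (by omega)
    simp [this, cntB]
  | succ y ih =>
    rw [cntB, enc_ef]
    have hlt : ef f y + 1 ≤ ef f (y + 1) := ef_strictMono f (Nat.lt_succ_self y)
    have : cntB (enc f) (ef f (y + 1)) = cntB (enc f) (ef f y + 1) := by
      apply cntB_stable hlt
      intro k hk1 hk2
      apply enc_false
      intro j hj
      rcases Nat.lt_or_ge j (y + 1) with h1 | h1
      · have := (ef_strictMono f).monotone (Nat.lt_succ_iff.mp h1)
        omega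
      · have := (ef_strictMono f).monotone h1
        omega
    rw [this, ih]
    simp

private lemma cntB_enc_lt (f : ℕ → ℕ) (x : ℕ) : cntB (enc f) (ef f x) = x := by
  have h1 := cntB_enc f x
  have h2 : cntB (enc f) (ef f x + 1) = cntB (enc f) (ef f x) + 1 := by
    rw [cntB, enc_ef]; simp
  omega

private def Pred (ψ' : ℕ → ℕ → ℕ → Option Bool) (c x n m : ℕ) : Prop :=
  (∀ k ≤ m, (ψ' c k n).isSome) ∧ ψ' c m n = some true ∧
    cntB (fun k => decide (ψ' c k n = some true)) (m + 1) = x + 1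

private noncomputable def ψdec (ψ' : ℕ → ℕ → ℕ → Option Bool) (c x n : ℕ) : Option ℕ :=
  if h : ∃ m, Pred ψ' c x n m then
    if x = 0 then some (Nat.find h)
    else if h' : ∃ m, Pred ψ' c (x - 1) n m then some (Nat.find h - Nat.find h' - 1) else none
  else none

private lemma pred_stable {ψ' : ℕ → ℕ → ℕ → Option Bool}
    (hst : ∀ c x n₁ n₂ v, ψ' c x n₁ = some v → n₂ ≥ n₁ → ψ' c x n₂ = some v)
    {c x n₁ n₂ : ℕ} (hn : n₁ ≤ n₂) (h₁ : ∃ m, Pred ψ' c x n₁ m) :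
    ∃ h₂ : ∃ m, Pred ψ' c x n₂ m, Nat.find h₂ = Nat.find h₁ := by
  set m₀ := Nat.find h₁ with hm₀
  have hP : Pred ψ' c x n₁ m₀ := Nat.find_spec h₁
  have hbits : ∀ k ≤ m₀, ψ' c k n₂ = ψ' c k n₁ := by
    intro k hk
    obtain ⟨v, hv⟩ := Option.isSome_iff_exists.mp (hP.1 k hk)
    rw [hv]
    exact hst c k n₁ n₂ v hv hn
  have hP₂ : Pred ψ' c x n₂ m₀ := by
    refine ⟨fun k hk => ?_, ?_, ?_⟩
    · rw [hbits k hk]; exact hP.1 k hk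
    · rw [hbits m₀ le_rfl]; exact hP.2.1
    · rw [cntB_congr (m₀ + 1) (fun k hk => by rw [hbits k (by omega)])]
      exact hP.2.2
  refine ⟨⟨m₀, hP₂⟩, ?_⟩
  rw [Nat.find_eq_iff]
  refine ⟨hP₂, fun k hk hPk => ?_⟩
  apply Nat.find_min h₁ hk
  have hkm : k ≤ m₀ := le_of_lt hk
  refine ⟨fun j hj => ?_, ?_, ?_⟩
  · rw [← hbits j (le_trans hj hkm)]; exact hPk.1 j hj
  · rw [← hbits k hkm]; exact hPk.2.1
  · rw [cntB_congr (k + 1) (fun j hj => by rw [← hbits j (by omega)])]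
    exact hPk.2.2

private lemma ψdec_stationary {ψ' : ℕ → ℕ → ℕ → Option Bool}
    (hst : ∀ c x n₁ n₂ v, ψ' c x n₁ = some v → n₂ ≥ n₁ → ψ' c x n₂ = some v) :
    ∀ c x n₁ n₂ v, ψdec ψ' c x n₁ = some v → n₂ ≥ n₁ → ψdec ψ' c x n₂ = some v := by
  intro c x n₁ n₂ v hv hn
  unfold ψdec at hv ⊢
  by_cases h₁ : ∃ m, Pred ψ' c x n₁ m
  · obtain ⟨h₂, hfind⟩ := pred_stable hst hn h₁
    rw [dif_pos h₁] at hv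
    rw [dif_pos h₂]
    by_cases hx : x = 0
    · rw [if_pos hx] at hv
      rw [if_pos hx, hfind]
      exact hv
    · rw [if_neg hx] at hv
      rw [if_neg hx]
      by_cases h₁' : ∃ m, Pred ψ' c (x - 1) n₁ m
      · obtain ⟨h₂', hfind'⟩ := pred_stable hst hn h₁'
        rw [dif_pos h₁'] at hv
        rw [dif_pos h₂', hfind, hfind']
        exact hv
      · rw [dif_neg h₁'] at hv
        exact absurd hv (by simp)
  · rw [dif_neg h₁] at hv
    exact absurd hv (by simp)

private lemma ψdec_correct {ψ' : ℕ → ℕ → ℕ → Option Bool}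
    (hst : ∀ c x n₁ n₂ v, ψ' c x n₁ = some v → n₂ ≥ n₁ → ψ' c x n₂ = some v)
    {c : ℕ} {f : ℕ → ℕ} (hb : ∀ k, ∃ n, ψ' c k n = some (enc f k)) :
    ∀ x, ∃ n, ψdec ψ' c x n = some (f x) := by
  intro x
  choose w hw using hb
  set N := (Finset.range (ef f x + 1)).sup w with hN
  have hbit : ∀ k ≤ ef f x, ψ' c k N = some (enc f k) := by
    intro k hk
    exact hst c k (w k) N _ (hw k) (Finset.le_sup (Finset.mem_range.mpr (by omega)))
  have hfind : ∀ y, y ≤ x → ∃ h : ∃ m, Pred ψ' c y N m, Nat.find h = ef f y := by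
    intro y hy
    have hey : ef f y ≤ ef f x := (ef_strictMono f).monotone hy
    have hcnt : ∀ k, k ≤ ef f y →
        cntB (fun k' => decide (ψ' c k' N = some true)) (k + 1) = cntB (enc f) (k + 1) := by
      intro k hk
      apply cntB_congr
      intro j hj
      rw [hbit j (by omega)]
      cases enc f j <;> simp
    have hPy : Pred ψ' c y N (ef f y) := by
      refine ⟨fun k hk => ?_, ?_, ?_⟩
      · rw [hbit k (le_trans hk hey)]; simp
      · rw [hbit _ hey, enc_ef]
      · rw [hcnt _ le_rfl, cntB_enc]
    refine ⟨⟨_, hPy⟩, ?_⟩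
    rw [Nat.find_eq_iff]
    refine ⟨hPy, fun k hk hPk => ?_⟩
    have hc := hPk.2.2
    rw [hcnt k (le_of_lt hk)] at hc
    have hle : cntB (enc f) (k + 1) ≤ cntB (enc f) (ef f y) := cntB_mono _ (by omega)
    rw [cntB_enc_lt] at hle
    omega
  obtain ⟨h, hfx⟩ := hfind x le_rfl
  refine ⟨N, ?_⟩
  unfold ψdec
  rw [dif_pos h]
  cases x with
  | zero =>
    rw [if_pos rfl, hfx]
    simp [ef, Sf]
  | succ y =>
    obtain ⟨h', hfy⟩ := hfind y (Nat.le_succ y)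
    rw [if_neg (Nat.succ_ne_zero y)]
    have : y + 1 - 1 = y := rfl
    rw [this] at *
    rw [dif_pos h', hfx, hfy]
    have h1 : ef f (y + 1) = ef f y + 1 + f (y + 1) := by simp [ef, Sf]
    congr 1
    omega

theorem SCT_iff_SCT_bool :
    (∃ ψ : ℕ → ℕ → ℕ → Option ℕ,
      (∀ c x n₁ n₂ v, ψ c x n₁ = some v → n₂ ≥ n₁ → ψ c x n₂ = some v) ∧
      (∀ f : ℕ → ℕ → ℕ, ∃ γ : ℕ → ℕ, ∀ i x, ∃ n, ψ (γ i) x n = some (f i x))) ↔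
    (∃ ψ' : ℕ → ℕ → ℕ → Option Bool,
      (∀ c x n₁ n₂ v, ψ' c x n₁ = some v → n₂ ≥ n₁ → ψ' c x n₂ = some v) ∧
      (∀ f : ℕ → ℕ → Bool, ∃ γ : ℕ → ℕ, ∀ i x, ∃ n, ψ' (γ i) x n = some (f i x))) := by
  constructor
  · rintro ⟨ψ, hst, huniv⟩
    refine ⟨fun c x n => (ψ c x n).map (fun v => decide (v = 1)), ?_, ?_⟩
    · intro c x n₁ n₂ v hv hn
      rcases Option.map_eq_some_iff.mp hv with ⟨w, hw, rfl⟩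
      show Option.map (fun v => decide (v = 1)) (ψ c x n₂) = _
      rw [hst c x n₁ n₂ w hw hn, Option.map_some]
    · intro f
      obtain ⟨γ, hγ⟩ := huniv (fun i x => if f i x then 1 else 0)
      refine ⟨γ, fun i x => ?_⟩
      obtain ⟨n, hn⟩ := hγ i x
      refine ⟨n, ?_⟩
      show Option.map (fun v => decide (v = 1)) (ψ (γ i) x n) = _
      rw [hn, Option.map_some]
      cases f i x <;> simp
  · rintro ⟨ψ', hst, huniv⟩
    refine ⟨ψdec ψ', ψdec_stationary hst, ?_⟩
    intro f
    obtain ⟨γ, hγ⟩ := huniv (fun i => enc (f i))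
    exact ⟨γ, fun i x => ψdec_correct hst (fun k => hγ i k) x⟩
end
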